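/- arXiv:1605.00551 — 2 statements merged into one kernel-verified Lean document; each statement's English description precedes it below -/
import Mathlib

section
/- Let A: V¹ × V¹ → ℝ be a symmetric positive-definite bilinear form, and b: V¹ × V² → ℝ a bilinear form on finite-dimensional spaces satisfying the inf-sup condition: for every p ∈ V² there exists w ∈ V¹, w ≠ 0, with b(w,p) ≥ c‖w‖‖p‖ for a fixed c > 0. Then the saddle-point system A(v,w) + b(w,p) = F(w) for all w, b(v,q) = G(q) for all q, has a unique solution (v,p) ∈ V¹ × V² for any linear functionals F, G. -/
/-!
The saddle-point system is the equation `T (v, p) = (F, G)` for the linear map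
`T (v, p) = (A v + b(·, p), b v)` from `V¹ × V²` to the dual space `V¹* × V²*`, which has the
same finite dimension. So it suffices that `T` is injective. If `T (v, p) = 0`, testing the first
equation with `w = v` and using the second with `q = p` gives `A(v, v) = 0`, so `v = 0`; then
`b(w, p) = 0` for all `w`, which the inf-sup condition only allows for `p = 0`.
-/

open Module

section SaddlePoint

variable {K V₁ V₂ : Type*} [Field K] [AddCommGroup V₁] [Module K V₁]
  [AddCommGroup V₂] [Module K V₂]

def saddlePointMap (A : V₁ →ₗ[K] V₁ →ₗ[K] K) (b : V₁ →ₗ[K] V₂ →ₗ[K] K) :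
    V₁ × V₂ →ₗ[K] Dual K V₁ × Dual K V₂ :=
  (A ∘ₗ LinearMap.fst K V₁ V₂ + b.flip ∘ₗ LinearMap.snd K V₁ V₂).prod (b ∘ₗ LinearMap.fst K V₁ V₂)

theorem saddlePointMap_eq_iff (A : V₁ →ₗ[K] V₁ →ₗ[K] K) (b : V₁ →ₗ[K] V₂ →ₗ[K] K)
    (vp : V₁ × V₂) (F : Dual K V₁) (G : Dual K V₂) :
    saddlePointMap A b vp = (F, G) ↔
      (∀ w, A vp.1 w + b w vp.2 = F w) ∧ ∀ q, b vp.1 q = G q := by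
  simp only [Prod.ext_iff, LinearMap.ext_iff]
  rfl

theorem saddlePointMap_injective [LinearOrder K] [IsStrictOrderedRing K]
    {A : V₁ →ₗ[K] V₁ →ₗ[K] K} (hA : ∀ v, v ≠ 0 → 0 < A v v)
    {b : V₁ →ₗ[K] V₂ →ₗ[K] K} (hb : Function.Injective b.flip) :
    Function.Injective (saddlePointMap A b) := by
  rw [← LinearMap.ker_eq_bot, LinearMap.ker_eq_bot']
  rintro ⟨v, p⟩ hvp
  obtain ⟨hfirst, hsecond⟩ := (saddlePointMap_eq_iff A b (v, p) 0 0).mp hvp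
  have hv : v = 0 := by
    by_contra hv
    have hAvv : A v v = 0 := by simpa [hsecond p] using hfirst v
    exact (hA v hv).ne' hAvv
  subst hv
  have hp : p = 0 := hb <| LinearMap.ext fun w => by simpa using hfirst w
  simp [hp]

theorem saddlePointMap_bijective [FiniteDimensional K V₁] [FiniteDimensional K V₂]
    [LinearOrder K] [IsStrictOrderedRing K]
    {A : V₁ →ₗ[K] V₁ →ₗ[K] K} (hA : ∀ v, v ≠ 0 → 0 < A v v)
    {b : V₁ →ₗ[K] V₂ →ₗ[K] K} (hb : Function.Injective b.flip) :
    Function.Bijective (saddlePointMap A b) := by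
  have hinj := saddlePointMap_injective hA hb
  have hdim : finrank K (V₁ × V₂) = finrank K (Dual K V₁ × Dual K V₂) := by
    simp only [finrank_prod, Subspace.dual_finrank_eq]
  exact ⟨hinj, (LinearMap.injective_iff_surjective_of_finrank_eq_finrank hdim).mp hinj⟩

end SaddlePoint

theorem LinearMap.flip_injective_of_infSup {V₁ V₂ : Type*}
    [NormedAddCommGroup V₁] [Module ℝ V₁] [NormedAddCommGroup V₂] [Module ℝ V₂]
    (b : V₁ →ₗ[ℝ] V₂ →ₗ[ℝ] ℝ) {c : ℝ} (hc : 0 < c)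
    (hinfsup : ∀ p : V₂, ∃ w : V₁, w ≠ 0 ∧ b w p ≥ c * ‖w‖ * ‖p‖) :
    Function.Injective b.flip := by
  rw [← LinearMap.ker_eq_bot, LinearMap.ker_eq_bot']
  intro p hp
  by_contra hp0
  obtain ⟨w, hw0, hwp⟩ := hinfsup p
  have hbwp : b w p = 0 := LinearMap.congr_fun hp w
  have hpos : 0 < c * ‖w‖ * ‖p‖ := by positivity
  linarith

theorem stmt_6_general
    {V1 V2 : Type*}
    [NormedAddCommGroup V1] [InnerProductSpace ℝ V1] [FiniteDimensional ℝ V1]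
    [NormedAddCommGroup V2] [InnerProductSpace ℝ V2] [FiniteDimensional ℝ V2]
    (A : V1 →ₗ[ℝ] V1 →ₗ[ℝ] ℝ)
    (hApos : ∀ v, v ≠ 0 → 0 < A v v)
    (b : V1 →ₗ[ℝ] V2 →ₗ[ℝ] ℝ)
    (c : ℝ) (hc : 0 < c)
    (hinfsup : ∀ p : V2, ∃ w : V1, w ≠ 0 ∧ b w p ≥ c * ‖w‖ * ‖p‖)
    (F : V1 →ₗ[ℝ] ℝ) (G : V2 →ₗ[ℝ] ℝ) :
    ∃! vp : V1 × V2,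
      (∀ w : V1, A vp.1 w + b w vp.2 = F w) ∧ (∀ q : V2, b vp.1 q = G q) := by
  have hT := saddlePointMap_bijective hApos (b.flip_injective_of_infSup hc hinfsup)
  simpa only [saddlePointMap_eq_iff] using hT.existsUnique (F, G)

/-- Finite-dimensional Brezzi theorem: a symmetric positive-definite form `A` together with an
inf-sup stable form `b` yields a uniquely solvable saddle-point system. -/
theorem stmt_6
    {V1 V2 : Type*}
    [NormedAddCommGroup V1] [InnerProductSpace ℝ V1] [FiniteDimensional ℝ V1]
    [NormedAddCommGroup V2] [InnerProductSpace ℝ V2] [FiniteDimensional ℝ V2]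
    (A : V1 →ₗ[ℝ] V1 →ₗ[ℝ] ℝ)
    (hAsymm : ∀ v w, A v w = A w v)
    (hApos : ∀ v, v ≠ 0 → 0 < A v v)
    (b : V1 →ₗ[ℝ] V2 →ₗ[ℝ] ℝ)
    (c : ℝ) (hc : 0 < c)
    (hinfsup : ∀ p : V2, ∃ w : V1, w ≠ 0 ∧ b w p ≥ c * ‖w‖ * ‖p‖)
    (F : V1 →ₗ[ℝ] ℝ) (G : V2 →ₗ[ℝ] ℝ) :
    ∃! vp : V1 × V2,
      (∀ w : V1, A vp.1 w + b w vp.2 = F w) ∧ (∀ q : V2, b vp.1 q = G q) :=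
  stmt_6_general A hApos b c hc hinfsup F G
end

section
/- Let q, D, F, u solve the discrete potential vorticity relation ∫ γ q D dx = -∫ ∇⊥γ·u dx + ∫ γ f dx for all γ ∈ V⁰ (a finite-dimensional space of H¹ functions vanishing on ∂Ω), together with the momentum equation tested with w = ∇⊥γ: ∫ ∇⊥γ·u_t dx + ∫ ∇⊥γ·F⊥ q dx = ∫ ∇·(∇⊥γ)(gD + |u|²/2) dx. Since ∇·∇⊥γ = 0, it follows that ∫ γ (qD)_t dx - ∫ ∇γ·(F q) dx = 0 for all γ ∈ V⁰. -/
open MeasureTheory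

/-!
Differentiating the PV relation in time gives `∫ γ (qD)_t = -∫ ∇⊥γ·u_t`. In the momentum
equation tested with `∇⊥γ` the Bernoulli term drops out, because `∇·∇⊥γ = ∂₁∂₂γ - ∂₂∂₁γ`
vanishes by the symmetry of second derivatives of the `C²` function `γ`. What remains is
`∫ ∇⊥γ·u_t = -∫ (∇⊥γ·F⊥) q`, and pointwise `∇⊥γ·F⊥ = ∇γ·F`.
-/

lemma fderiv_fderiv_apply_comm {E F : Type*} [NormedAddCommGroup E] [NormedSpace ℝ E]
    [NormedAddCommGroup F] [NormedSpace ℝ F] {γ : E → F} (hγ : ContDiff ℝ 2 γ)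
    (x v w : E) :
    fderiv ℝ (fun y => fderiv ℝ γ y v) x w = fderiv ℝ (fun y => fderiv ℝ γ y w) x v := by
  have hd : DifferentiableAt ℝ (fderiv ℝ γ) x :=
    ((hγ.fderiv_right (m := 1) (by norm_num)).differentiable (by norm_num)).differentiableAt
  have hsymm : IsSymmSndFDerivAt ℝ γ x :=
    hγ.contDiffAt.isSymmSndFDerivAt (by simp [minSmoothness_of_isRCLikeNormedField])
  have happly (a b : E) :
      fderiv ℝ (fun y => fderiv ℝ γ y a) x b = fderiv ℝ (fderiv ℝ γ) x b a := by
    rw [fderiv_clm_apply hd (differentiableAt_const a)]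
    simp
  rw [happly, happly, hsymm]

lemma div_perp_grad_eq_zero {γ : ℝ × ℝ → ℝ} (hγ : ContDiff ℝ 2 γ) (x : ℝ × ℝ) :
    fderiv ℝ (fun y => -(fderiv ℝ γ y (0, 1))) x (1, 0)
      + fderiv ℝ (fun y => fderiv ℝ γ y (1, 0)) x (0, 1) = 0 := by
  rw [fderiv_fun_neg, neg_apply, fderiv_fderiv_apply_comm hγ x (0, 1) (1, 0),
    neg_add_cancel]

lemma HasDerivAt.eq_neg_of_eq_neg_add_const {f g : ℝ → ℝ} {f' g' c t : ℝ}
    (hf : HasDerivAt f f' t) (hg : HasDerivAt g g' t) (hfg : ∀ s, f s = -g s + c) :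
    f' = -g' := by
  rw [show f = fun s => -g s + c from funext hfg] at hf
  exact hf.unique (hg.neg.add_const c)

theorem stmt_9_general
    (Ω : Set (ℝ × ℝ))
    (V0 : Set ((ℝ × ℝ) → ℝ))
    (hV0 : ∀ γ ∈ V0, ContDiff ℝ 2 γ)
    (fcor : (ℝ × ℝ) → ℝ) (gconst : ℝ)
    -- time-dependent fields: potential vorticity, depth, velocity and mass flux,
    -- together with the fields representing `u_t` and `(qD)_t`
    (q D : ℝ → (ℝ × ℝ) → ℝ) (u F : ℝ → (ℝ × ℝ) → ℝ × ℝ)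
    (ut : ℝ → (ℝ × ℝ) → ℝ × ℝ) (qDt : ℝ → (ℝ × ℝ) → ℝ)
    -- the discrete PV relation  ∫ γ qD = -∫ ∇⊥γ·u + ∫ γ f
    (hPV : ∀ γ ∈ V0, ∀ t : ℝ,
      ∫ x in Ω, γ x * (q t x * D t x)
        = -(∫ x in Ω, ((-(fderiv ℝ γ x (0, 1))) * (u t x).1
              + (fderiv ℝ γ x (1, 0)) * (u t x).2))
          + ∫ x in Ω, γ x * fcor x)
    -- `(qD)_t` and `u_t` are the time derivatives of the corresponding integrals
    (hdqD : ∀ γ ∈ V0, ∀ t : ℝ,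
      HasDerivAt (fun s => ∫ x in Ω, γ x * (q s x * D s x))
        (∫ x in Ω, γ x * qDt t x) t)
    (hdu : ∀ γ ∈ V0, ∀ t : ℝ,
      HasDerivAt (fun s => ∫ x in Ω, ((-(fderiv ℝ γ x (0, 1))) * (u s x).1
          + (fderiv ℝ γ x (1, 0)) * (u s x).2))
        (∫ x in Ω, ((-(fderiv ℝ γ x (0, 1))) * (ut t x).1
          + (fderiv ℝ γ x (1, 0)) * (ut t x).2)) t)
    -- the momentum equation tested with `w = ∇⊥γ`:
    -- ∫ ∇⊥γ·u_t + ∫ (∇⊥γ·F⊥) q = ∫ ∇·(∇⊥γ) (gD + |u|²/2)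
    (hmom : ∀ γ ∈ V0, ∀ t : ℝ,
      (∫ x in Ω, ((-(fderiv ℝ γ x (0, 1))) * (ut t x).1
          + (fderiv ℝ γ x (1, 0)) * (ut t x).2))
        + (∫ x in Ω, ((-(fderiv ℝ γ x (0, 1))) * (-(F t x).2)
            + (fderiv ℝ γ x (1, 0)) * (F t x).1) * q t x)
        = ∫ x in Ω,
            (fderiv ℝ (fun y => -(fderiv ℝ γ y (0, 1))) x (1, 0)
              + fderiv ℝ (fun y => fderiv ℝ γ y (1, 0)) x (0, 1))
            * (gconst * D t x + ‖u t x‖ ^ 2 / 2)) :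
    ∀ γ ∈ V0, ∀ t : ℝ,
      (∫ x in Ω, γ x * qDt t x)
        - (∫ x in Ω, ((fderiv ℝ γ x (1, 0)) * ((F t x).1 * q t x)
            + (fderiv ℝ γ x (0, 1)) * ((F t x).2 * q t x))) = 0 := by
  intro γ hγ t
  have hqDt := (hdqD γ hγ t).eq_neg_of_eq_neg_add_const (hdu γ hγ t) (hPV γ hγ)
  have hmom' := hmom γ hγ t
  simp only [div_perp_grad_eq_zero (hV0 γ hγ), zero_mul, integral_zero] at hmom'
  have hflux : (fun x => ((-(fderiv ℝ γ x (0, 1))) * (-(F t x).2)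
        + (fderiv ℝ γ x (1, 0)) * (F t x).1) * q t x)
      = fun x => fderiv ℝ γ x (1, 0) * ((F t x).1 * q t x)
        + fderiv ℝ γ x (0, 1) * ((F t x).2 * q t x) := by
    funext x; ring
  rw [hflux] at hmom'
  linarith

/-- Discrete potential vorticity conservation for the compatible finite element shallow
water scheme: from the PV relation, the momentum equation tested with `w = ∇⊥γ`, and
`∇·∇⊥γ = 0`, it follows that `∫ γ (qD)_t - ∫ ∇γ·(Fq) = 0` for all `γ ∈ V⁰`. -/
theorem stmt_9
    (Ω : Set (ℝ × ℝ)) (hΩ : MeasurableSet Ω)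
    (V0 : Set ((ℝ × ℝ) → ℝ))
    (hV0 : ∀ γ ∈ V0, ContDiff ℝ 2 γ)
    (fcor : (ℝ × ℝ) → ℝ) (gconst : ℝ) (hg : 0 < gconst)
    -- time-dependent fields: potential vorticity, depth, velocity and mass flux,
    -- together with the fields representing `u_t` and `(qD)_t`
    (q D : ℝ → (ℝ × ℝ) → ℝ) (u F : ℝ → (ℝ × ℝ) → ℝ × ℝ)
    (ut : ℝ → (ℝ × ℝ) → ℝ × ℝ) (qDt : ℝ → (ℝ × ℝ) → ℝ)
    -- the discrete PV relation  ∫ γ qD = -∫ ∇⊥γ·u + ∫ γ f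
    (hPV : ∀ γ ∈ V0, ∀ t : ℝ,
      ∫ x in Ω, γ x * (q t x * D t x)
        = -(∫ x in Ω, ((-(fderiv ℝ γ x (0, 1))) * (u t x).1
              + (fderiv ℝ γ x (1, 0)) * (u t x).2))
          + ∫ x in Ω, γ x * fcor x)
    -- `(qD)_t` and `u_t` are the time derivatives of the corresponding integrals
    (hdqD : ∀ γ ∈ V0, ∀ t : ℝ,
      HasDerivAt (fun s => ∫ x in Ω, γ x * (q s x * D s x))
        (∫ x in Ω, γ x * qDt t x) t)
    (hdu : ∀ γ ∈ V0, ∀ t : ℝ,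
      HasDerivAt (fun s => ∫ x in Ω, ((-(fderiv ℝ γ x (0, 1))) * (u s x).1
          + (fderiv ℝ γ x (1, 0)) * (u s x).2))
        (∫ x in Ω, ((-(fderiv ℝ γ x (0, 1))) * (ut t x).1
          + (fderiv ℝ γ x (1, 0)) * (ut t x).2)) t)
    -- the momentum equation tested with `w = ∇⊥γ`:
    -- ∫ ∇⊥γ·u_t + ∫ (∇⊥γ·F⊥) q = ∫ ∇·(∇⊥γ) (gD + |u|²/2)
    (hmom : ∀ γ ∈ V0, ∀ t : ℝ,
      (∫ x in Ω, ((-(fderiv ℝ γ x (0, 1))) * (ut t x).1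
          + (fderiv ℝ γ x (1, 0)) * (ut t x).2))
        + (∫ x in Ω, ((-(fderiv ℝ γ x (0, 1))) * (-(F t x).2)
            + (fderiv ℝ γ x (1, 0)) * (F t x).1) * q t x)
        = ∫ x in Ω,
            (fderiv ℝ (fun y => -(fderiv ℝ γ y (0, 1))) x (1, 0)
              + fderiv ℝ (fun y => fderiv ℝ γ y (1, 0)) x (0, 1))
            * (gconst * D t x + ‖u t x‖ ^ 2 / 2)) :
    ∀ γ ∈ V0, ∀ t : ℝ,
      (∫ x in Ω, γ x * qDt t x)
        - (∫ x in Ω, ((fderiv ℝ γ x (1, 0)) * ((F t x).1 * q t x)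
            + (fderiv ℝ γ x (0, 1)) * ((F t x).2 * q t x))) = 0 :=
  stmt_9_general Ω V0 hV0 fcor gconst q D u F ut qDt hPV hdqD hdu hmom
end
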